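/- arXiv:1510.00284 — 6 statements merged into one kernel-verified Lean document; each statement's English description precedes it below -/
import Mathlib

section
/- Let V be a real normed space, let 0 ≤ q < 1, and let T : V → V satisfy ‖T v₁ − T v₂‖ ≤ q ‖v₁ − v₂‖ for all v₁, v₂ ∈ V, and let u⋆ ∈ V satisfy T u⋆ = u⋆. Then for every v ∈ V and every ũ ∈ V, (1/(1+q)) (‖ũ − v‖ − ‖T v − ũ‖) ≤ ‖v − u⋆‖ ≤ (1/(1−q)) (‖ũ − v‖ + ‖T v − ũ‖). -/
/-!
The residual `‖v - T v‖` of one contraction step is comparable to the error: by the triangle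
inequality through `u⋆` and `‖T v - u⋆‖ ≤ q ‖v - u⋆‖`, it lies between `(1 - q) ‖v - u⋆‖` and
`(1 + q) ‖v - u⋆‖`. The triangle inequality through `ũ` in turn squeezes the residual between
`‖ũ - v‖ - ‖T v - ũ‖` and `‖ũ - v‖ + ‖T v - ũ‖`.
-/

section Contraction

variable {X : Type*} [PseudoMetricSpace X] {q : ℝ} {v u Tv : X}

lemma one_sub_mul_dist_le_dist (h : dist Tv u ≤ q * dist v u) :
    (1 - q) * dist v u ≤ dist v Tv := by
  linarith [dist_triangle v Tv u]

lemma dist_le_one_add_mul_dist (h : dist Tv u ≤ q * dist v u) :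
    dist v Tv ≤ (1 + q) * dist v u := by
  linarith [dist_triangle_right v Tv u]

lemma dist_le_div_one_sub (hq1 : q < 1) (h : dist Tv u ≤ q * dist v u) (w : X) :
    dist v u ≤ (dist w v + dist Tv w) / (1 - q) := by
  rw [le_div_iff₀ (sub_pos.mpr hq1), mul_comm]
  calc (1 - q) * dist v u ≤ dist v Tv := one_sub_mul_dist_le_dist h
    _ ≤ dist w v + dist Tv w := by linarith [dist_triangle v w Tv, dist_comm v w, dist_comm w Tv]

lemma div_one_add_le_dist (hq0 : 0 ≤ q) (h : dist Tv u ≤ q * dist v u) (w : X) :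
    (dist w v - dist Tv w) / (1 + q) ≤ dist v u := by
  rw [div_le_iff₀ (by linarith), mul_comm]
  calc dist w v - dist Tv w ≤ dist v Tv := by
        linarith [dist_triangle w Tv v, dist_comm Tv v, dist_comm w Tv]
    _ ≤ (1 + q) * dist v u := dist_le_one_add_mul_dist h

end Contraction

theorem stmt10_general {V : Type*} [NormedAddCommGroup V]
    (q : ℝ) (hq0 : 0 ≤ q) (hq1 : q < 1)
    (T : V → V) (hT : ∀ v1 v2 : V, ‖T v1 - T v2‖ ≤ q * ‖v1 - v2‖)
    (ustar : V) (hu : T ustar = ustar) :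
    ∀ v utilde : V,
      (1 / (1 + q)) * (‖utilde - v‖ - ‖T v - utilde‖) ≤ ‖v - ustar‖ ∧
      ‖v - ustar‖ ≤ (1 / (1 - q)) * (‖utilde - v‖ + ‖T v - utilde‖) := by
  intro v utilde
  have hstep : dist (T v) ustar ≤ q * dist v ustar := by
    simpa only [hu, dist_eq_norm] using hT v ustar
  simp only [one_div_mul_eq_div, ← dist_eq_norm]
  exact ⟨div_one_add_le_dist hq0 hstep utilde, dist_le_div_one_sub hq1 hstep utilde⟩

/-- guaranteed two-sided a posteriori bounds (3.8)–(3.9).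
If `T` is a `q`-contraction (`0 ≤ q < 1`) on a real normed space `V` with fixed
point `u⋆`, then for every `v` and every `ũ`,
`(1/(1+q)) (‖ũ − v‖ − ‖T v − ũ‖) ≤ ‖v − u⋆‖ ≤ (1/(1−q)) (‖ũ − v‖ + ‖T v − ũ‖)`. -/
theorem stmt10 {V : Type*} [NormedAddCommGroup V] [NormedSpace ℝ V]
    (q : ℝ) (hq0 : 0 ≤ q) (hq1 : q < 1)
    (T : V → V) (hT : ∀ v1 v2 : V, ‖T v1 - T v2‖ ≤ q * ‖v1 - v2‖)
    (ustar : V) (hu : T ustar = ustar) :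
    ∀ v utilde : V,
      (1 / (1 + q)) * (‖utilde - v‖ - ‖T v - utilde‖) ≤ ‖v - ustar‖ ∧
      ‖v - ustar‖ ≤ (1 / (1 - q)) * (‖utilde - v‖ + ‖T v - utilde‖) :=
  stmt10_general q hq0 hq1 T hT ustar hu
end

section
/- Let N ≥ 1, let a, b : Fin N → ℝ with b_i > 0 for all i, and suppose λ₀ b_i ≤ a_i ≤ λ₁ b_i for all i, where λ₀, λ₁ ∈ ℝ. Then for every x : Fin N → ℝ, λ₀ · xᵀ A[b] x ≤ xᵀ A[a] x ≤ λ₁ · xᵀ A[b] x. -/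
/-!
Writing `D` for the backward-difference matrix, `(D x)_k = x_k - x_{k-1}` (with `x_{-1} = 0`),
the stiffness matrix factors as `A[a] = Dᵀ diag(a) D + a_{N-1} e_{N-1} e_{N-1}ᵀ`, so that
`xᵀ A[a] x = ∑ₖ a_k (x_k - x_{k-1})² + a_{N-1} x_{N-1}²`. Hence `A[a]` is positive semidefinite
for `a ≥ 0`, and since `a ↦ A[a]` is linear, `xᵀ A[a] x` is monotone in `a`. The theorem is this
monotonicity applied to `λ₀ b ≤ a ≤ λ₁ b`.
-/

open Matrix

/-- The 1D FEM stiffness matrix (4.4) (0-based indexing, grid factor `1/h` omitted):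
tridiagonal with `(A[a])_{i,i} = a_i + a_{i+1}` for `i = 0,…,N−2`,
`(A[a])_{N−1,N−1} = 2 a_{N−1}`, and `(A[a])_{i,i+1} = (A[a])_{i+1,i} = −a_{i+1}`. -/
def stiff {N : ℕ} (a : Fin N → ℝ) : Matrix (Fin N) (Fin N) ℝ :=
  Matrix.of fun i j =>
    let a' : ℕ → ℝ := fun k => if h : k < N then a ⟨k, h⟩ else 0
    if (i : ℕ) = (j : ℕ) then
      (if (i : ℕ) = N - 1 then 2 * a' i else a' i + a' ((i : ℕ) + 1))
    else if (i : ℕ) + 1 = (j : ℕ) then -a' j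
    else if (j : ℕ) + 1 = (i : ℕ) then -a' i
    else 0

def backwardDiff (N : ℕ) : Matrix (Fin N) (Fin N) ℝ :=
  of fun k i => if (k : ℕ) = i then 1 else if (k : ℕ) = i + 1 then -1 else 0

theorem stiff_eq_transpose_mul_diagonal_mul_add_diagonal {N : ℕ} (a : Fin N → ℝ) :
    stiff a = (backwardDiff N)ᵀ * diagonal a * backwardDiff N
      + diagonal fun i : Fin N => if (i : ℕ) = N - 1 then a i else 0 := by
  ext i j
  set a' : ℕ → ℝ := fun k => if h : k < N then a ⟨k, h⟩ else 0
  set d : ℕ → ℕ → ℝ := fun k i => if k = i then 1 else if k = i + 1 then -1 else 0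
  have hsum : ((backwardDiff N)ᵀ * diagonal a * backwardDiff N) i j
      = ∑ k ∈ Finset.range N, d k i * a' k * d k j := by
    rw [← Fin.sum_univ_eq_sum_range (fun k => d k i * a' k * d k j), mul_apply]
    simp only [mul_diagonal, transpose_apply]
    exact Finset.sum_congr rfl fun k _ => by simp [backwardDiff, a', d]
  -- column `i` of `D` is supported on the rows `i` and `i + 1`
  rw [Matrix.add_apply, hsum, Finset.sum_eq_add (i : ℕ) (i + 1) (by omega)]
  · clear hsum
    simp only [stiff, of_apply, diagonal_apply, Fin.ext_iff, a', d]
    grind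
  · intro k _ hk
    grind
  · simp
  · intro h
    grind

theorem posSemidef_stiff {N : ℕ} {a : Fin N → ℝ} (ha : 0 ≤ a) : (stiff a).PosSemidef := by
  rw [stiff_eq_transpose_mul_diagonal_mul_add_diagonal, ← conjTranspose_eq_transpose_of_trivial]
  refine (PosSemidef.diagonal ha).conjTranspose_mul_mul_same _ |>.add ?_
  exact PosSemidef.diagonal fun i => by dsimp only; split_ifs; exacts [ha i, le_rfl]

theorem stiff_sub {N : ℕ} (a c : Fin N → ℝ) : stiff (a - c) = stiff a - stiff c := by
  ext i j
  simp only [stiff, of_apply, Matrix.sub_apply, Pi.sub_apply]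
  grind

theorem stiff_smul {N : ℕ} (t : ℝ) (a : Fin N → ℝ) : stiff (t • a) = t • stiff a := by
  ext i j
  simp only [stiff, of_apply, Matrix.smul_apply, Pi.smul_apply, smul_eq_mul]
  grind

theorem dotProduct_stiff_mulVec_le {N : ℕ} {a c : Fin N → ℝ} (h : a ≤ c) (x : Fin N → ℝ) :
    x ⬝ᵥ stiff a *ᵥ x ≤ x ⬝ᵥ stiff c *ᵥ x := by
  have := (posSemidef_stiff (sub_nonneg.mpr h)).dotProduct_mulVec_nonneg x
  rwa [star_trivial, stiff_sub, sub_mulVec, dotProduct_sub, sub_nonneg] at this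

theorem dotProduct_stiff_smul_mulVec {N : ℕ} (t : ℝ) (a x : Fin N → ℝ) :
    x ⬝ᵥ stiff (t • a) *ᵥ x = t * (x ⬝ᵥ stiff a *ᵥ x) := by
  rw [stiff_smul, smul_mulVec, dotProduct_smul, smul_eq_mul]

theorem stmt12_general {N : ℕ} (a b : Fin N → ℝ)
    (lam0 lam1 : ℝ) (hab : ∀ i, lam0 * b i ≤ a i ∧ a i ≤ lam1 * b i) :
    ∀ x : Fin N → ℝ,
      lam0 * (x ⬝ᵥ (stiff b).mulVec x) ≤ x ⬝ᵥ (stiff a).mulVec x ∧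
      x ⬝ᵥ (stiff a).mulVec x ≤ lam1 * (x ⬝ᵥ (stiff b).mulVec x) := by
  intro x
  rw [← dotProduct_stiff_smul_mulVec, ← dotProduct_stiff_smul_mulVec]
  exact ⟨dotProduct_stiff_mulVec_le (fun i => (hab i).1) x,
    dotProduct_stiff_mulVec_le (fun i => (hab i).2) x⟩

/-- discrete spectral equivalence, Assumption (C) of §4.4.
If `b_i > 0` and `λ₀ b_i ≤ a_i ≤ λ₁ b_i` for all `i`, then
`λ₀ xᵀA[b]x ≤ xᵀA[a]x ≤ λ₁ xᵀA[b]x` for every `x`. -/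
theorem stmt12 {N : ℕ} (hN : 1 ≤ N) (a b : Fin N → ℝ) (hb : ∀ i, 0 < b i)
    (lam0 lam1 : ℝ) (hab : ∀ i, lam0 * b i ≤ a i ∧ a i ≤ lam1 * b i) :
    ∀ x : Fin N → ℝ,
      lam0 * (x ⬝ᵥ (stiff b).mulVec x) ≤ x ⬝ᵥ (stiff a).mulVec x ∧
      x ⬝ᵥ (stiff a).mulVec x ≤ lam1 * (x ⬝ᵥ (stiff b).mulVec x) :=
  stmt12_general a b lam0 lam1 hab
end

section
/- Let L ≥ 1 and ω ∈ ℝ. Then there exist functions g_ν : Fin 2 → ℂ for ν = 0,…,L−1 such that for every tuple of binary digits j : Fin L → Fin 2, exp(i·ω·(Σ_{ν=0}^{L−1} j_ν 2^ν)) = Π_{ν=0}^{L−1} g_ν(j_ν). In other words, the quantized (binary-folded) tensor of the vector (exp(i ω k))_{k=0}^{2^L−1} is an elementary (rank-1) tensor. -/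
theorem Complex.exp_mul_natCast_sum {ι : Type*} (s : Finset ι) (c : ℂ) (f : ι → ℕ) :
    Complex.exp (c * ((∑ i ∈ s, f i : ℕ) : ℂ)) = ∏ i ∈ s, Complex.exp (c * (f i : ℂ)) := by
  rw [Nat.cast_sum, Finset.mul_sum, Complex.exp_sum]

theorem stmt14_general (L : ℕ) (ω : ℝ) :
    ∃ g : Fin L → Fin 2 → ℂ,
      ∀ j : Fin L → Fin 2,
        Complex.exp (Complex.I * (ω : ℂ) *
            ((∑ ν : Fin L, (j ν : ℕ) * 2 ^ (ν : ℕ) : ℕ) : ℂ)) =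
          ∏ ν : Fin L, g ν (j ν) :=
  ⟨fun ν b => Complex.exp (Complex.I * ω * ((b * 2 ^ (ν : ℕ) : ℕ) : ℂ)),
    fun _ => Complex.exp_mul_natCast_sum _ _ _⟩

/-- Proposition 4.1(A): the complex exponential sampled on a
uniform dyadic grid has QTT rank 1. For `L ≥ 1` and `ω ∈ ℝ` there exist
functions `g_ν : Fin 2 → ℂ` such that for all binary digit tuples `j`,
`exp(i ω Σ_ν j_ν 2^ν) = Π_ν g_ν(j_ν)`. -/
theorem stmt14 (L : ℕ) (hL : 1 ≤ L) (ω : ℝ) :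
    ∃ g : Fin L → Fin 2 → ℂ,
      ∀ j : Fin L → Fin 2,
        Complex.exp (Complex.I * (ω : ℂ) *
            ((∑ ν : Fin L, (j ν : ℕ) * 2 ^ (ν : ℕ) : ℕ) : ℂ)) =
          ∏ ν : Fin L, g ν (j ν) :=
  stmt14_general L ω
end

section
/- Let L ≥ 1 and ω ∈ ℝ. Then there exist matrices G_ν(j) ∈ ℝ^{2×2} for each ν = 0,…,L−1 and j ∈ Fin 2, and vectors p, q ∈ ℝ², such that for every tuple of binary digits j : Fin L → Fin 2, sin(ω·(Σ_{ν=0}^{L−1} j_ν 2^ν)) = pᵀ (G_0(j₀) G_1(j₁) ⋯ G_{L−1}(j_{L−1})) q; moreover with the same cores G_ν one obtains cos(ω·(Σ_{ν=0}^{L−1} j_ν 2^ν)) by replacing p with another vector p' ∈ ℝ². -/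
/-!
Rotation of the plane by the angle `ω x` is a homomorphism from `(ℝ, +)` to `2 × 2` matrices,
and the dyadic index `x = Σ_ν j_ν 2^ν` is a sum of digit contributions, so the rotation by `ω x`
factors into the per-digit rotations by `ω j_ν 2^ν`. Its first column is `(cos ω x, sin ω x)`,
from which both functions are read off with the same cores.
-/

open Matrix

noncomputable def rotationMatrix (θ : ℝ) : Matrix (Fin 2) (Fin 2) ℝ :=
  !![Real.cos θ, -Real.sin θ; Real.sin θ, Real.cos θ]

theorem rotationMatrix_zero : rotationMatrix 0 = 1 := by
  simp [rotationMatrix, one_fin_two]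

theorem rotationMatrix_add (a b : ℝ) :
    rotationMatrix (a + b) = rotationMatrix a * rotationMatrix b := by
  ext i k
  fin_cases i <;> fin_cases k <;>
    simp [rotationMatrix, mul_apply, Fin.sum_univ_two, Real.cos_add, Real.sin_add] <;> ring

theorem list_prod_map_rotationMatrix (l : List ℝ) :
    (l.map rotationMatrix).prod = rotationMatrix l.sum := by
  induction l with
  | nil => simp [rotationMatrix_zero]
  | cons a l ih => simp [ih, rotationMatrix_add]

theorem prod_ofFn_rotationMatrix {n : ℕ} (θ : Fin n → ℝ) :
    (List.ofFn fun i => rotationMatrix (θ i)).prod = rotationMatrix (∑ i, θ i) := by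
  rw [← List.sum_ofFn, ← list_prod_map_rotationMatrix, List.map_ofFn]
  rfl

theorem dotProduct_rotationMatrix_mulVec_sin (θ : ℝ) :
    ![0, 1] ⬝ᵥ rotationMatrix θ *ᵥ ![1, 0] = Real.sin θ := by
  simp [rotationMatrix, dotProduct, Fin.sum_univ_two]

theorem dotProduct_rotationMatrix_mulVec_cos (θ : ℝ) :
    ![1, 0] ⬝ᵥ rotationMatrix θ *ᵥ ![1, 0] = Real.cos θ := by
  simp [rotationMatrix, dotProduct, Fin.sum_univ_two]

theorem stmt15_general (L : ℕ) (ω : ℝ) :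
    ∃ (G : Fin L → Fin 2 → Matrix (Fin 2) (Fin 2) ℝ) (p p' q : Fin 2 → ℝ),
      ∀ j : Fin L → Fin 2,
        (Real.sin (ω * ((∑ ν : Fin L, (j ν : ℕ) * 2 ^ (ν : ℕ) : ℕ) : ℝ)) =
          p ⬝ᵥ ((List.ofFn fun ν : Fin L => G ν (j ν)).prod).mulVec q) ∧
        (Real.cos (ω * ((∑ ν : Fin L, (j ν : ℕ) * 2 ^ (ν : ℕ) : ℕ) : ℝ)) =
          p' ⬝ᵥ ((List.ofFn fun ν : Fin L => G ν (j ν)).prod).mulVec q) := by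
  refine ⟨fun ν d => rotationMatrix (ω * ((d : ℕ) * 2 ^ (ν : ℕ))), ![0, 1], ![1, 0], ![1, 0],
    fun j => ?_⟩
  have hangle : ω * ((∑ ν : Fin L, (j ν : ℕ) * 2 ^ (ν : ℕ) : ℕ) : ℝ) =
      ∑ ν : Fin L, ω * ((j ν : ℕ) * 2 ^ (ν : ℕ)) := by
    push_cast
    rw [Finset.mul_sum]
  rw [prod_ofFn_rotationMatrix, ← hangle]
  exact ⟨(dotProduct_rotationMatrix_mulVec_sin _).symm,
    (dotProduct_rotationMatrix_mulVec_cos _).symm⟩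

/-- Proposition 4.1(B): `sin(ωx)` and `cos(ωx)` sampled on a
uniform dyadic grid have QTT rank 2. For `L ≥ 1` and `ω ∈ ℝ` there exist `2×2`
cores `G_ν(j)` and boundary vectors `p, p', q ∈ ℝ²` such that for all binary
digit tuples `j`,
`sin(ω Σ_ν j_ν 2^ν) = pᵀ (G_0(j₀)⋯G_{L−1}(j_{L−1})) q`, and with the same
cores, `cos(ω Σ_ν j_ν 2^ν) = p'ᵀ (G_0(j₀)⋯G_{L−1}(j_{L−1})) q`. -/
theorem stmt15 (L : ℕ) (hL : 1 ≤ L) (ω : ℝ) :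
    ∃ (G : Fin L → Fin 2 → Matrix (Fin 2) (Fin 2) ℝ) (p p' q : Fin 2 → ℝ),
      ∀ j : Fin L → Fin 2,
        (Real.sin (ω * ((∑ ν : Fin L, (j ν : ℕ) * 2 ^ (ν : ℕ) : ℕ) : ℝ)) =
          p ⬝ᵥ ((List.ofFn fun ν : Fin L => G ν (j ν)).prod).mulVec q) ∧
        (Real.cos (ω * ((∑ ν : Fin L, (j ν : ℕ) * 2 ^ (ν : ℕ) : ℕ) : ℝ)) =
          p' ⬝ᵥ ((List.ofFn fun ν : Fin L => G ν (j ν)).prod).mulVec q) :=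
  stmt15_general L ω
end

section
/- Let L ≥ 1, m ∈ ℕ, and let P be a real polynomial of degree at most m. Then there exist matrices G_ν(j) ∈ ℝ^{(m+1)×(m+1)} for each ν = 0,…,L−1 and j ∈ Fin 2, and vectors p, q ∈ ℝ^{m+1}, such that for every tuple of binary digits j : Fin L → Fin 2, P(Σ_{ν=0}^{L−1} j_ν 2^ν) = pᵀ (G_0(j₀) G_1(j₁) ⋯ G_{L−1}(j_{L−1})) q. -/
/-!
Sampling `x ↦ P x` with `deg P ≤ m` only requires the power vector `(x^0, …, x^m)`, and the
binomial theorem turns `(x^k)_k ↦ ((x + t)^k)_k` into right multiplication by a fixed upper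
triangular Pascal matrix depending on `t` alone. Since the grid point is `Σ_ν j_ν 2^ν`, feeding
the power vector of `0` through the Pascal matrices of the shifts `j_ν 2^ν` one digit at a time
yields the power vector of the grid point, and pairing it with the coefficients of `P` gives
`P(Σ_ν j_ν 2^ν)`.
-/

open Matrix

variable {R : Type*} [CommSemiring R]

def powers (n : ℕ) (s : R) : Fin (n + 1) → R := fun k => s ^ (k : ℕ)

/-- The matrix of the shift `x ↦ x + t` on polynomials of degree `≤ n` in the monomial basis;
the truncated subtraction is harmless since `C(l, k) = 0` for `l < k`. -/
def shiftCore (n : ℕ) (t : R) : Matrix (Fin (n + 1)) (Fin (n + 1)) R :=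
  fun k l => (Nat.choose l k : R) * t ^ ((l : ℕ) - (k : ℕ))

theorem powers_vecMul_shiftCore (n : ℕ) (s t : R) :
    powers n s ᵥ* shiftCore n t = powers n (s + t) := by
  funext l
  have hl : (l : ℕ) + 1 ≤ n + 1 := Nat.succ_le_succ l.is_le
  simp only [vecMul, dotProduct, powers, shiftCore]
  rw [Fin.sum_univ_eq_sum_range (fun k => s ^ k * ((Nat.choose l k : R) * t ^ ((l : ℕ) - k))),
    add_pow, ← Finset.sum_subset (Finset.range_subset_range.2 hl)]
  · exact Finset.sum_congr rfl fun k _ => by ring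
  · intro k _ hk
    rw [Finset.mem_range, not_lt] at hk
    simp [Nat.choose_eq_zero_of_lt hk]

theorem powers_vecMul_prod_map_shiftCore (n : ℕ) (ts : List R) (s : R) :
    powers n s ᵥ* (ts.map (shiftCore n)).prod = powers n (s + ts.sum) := by
  induction ts generalizing s with
  | nil => simp
  | cons t ts ih =>
    simp only [List.map_cons, List.prod_cons, List.sum_cons, ← vecMul_vecMul,
      powers_vecMul_shiftCore, ih, add_assoc]

theorem Polynomial.eval_eq_powers_dotProduct_coeff {P : Polynomial R} {n : ℕ}
    (hP : P.natDegree ≤ n) (x : R) :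
    P.eval x = powers n x ⬝ᵥ fun l => P.coeff l := by
  rw [Polynomial.eval_eq_sum_range' (Nat.lt_succ_of_le hP), dotProduct]
  simp only [powers]
  rw [Fin.sum_univ_eq_sum_range (fun k => x ^ k * P.coeff k)]
  exact Finset.sum_congr rfl fun k _ => mul_comm _ _

theorem stmt16_general (L m : ℕ) (P : Polynomial ℝ) (hP : P.natDegree ≤ m) :
    ∃ (G : Fin L → Fin 2 → Matrix (Fin (m + 1)) (Fin (m + 1)) ℝ)
      (p q : Fin (m + 1) → ℝ),
      ∀ j : Fin L → Fin 2,
        P.eval ((∑ ν : Fin L, (j ν : ℕ) * 2 ^ (ν : ℕ) : ℕ) : ℝ) =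
          p ⬝ᵥ ((List.ofFn fun ν : Fin L => G ν (j ν)).prod).mulVec q := by
  refine ⟨fun ν d => shiftCore m ((d : ℕ) * 2 ^ (ν : ℕ) : ℕ), powers m 0,
    fun l => P.coeff l, fun j => ?_⟩
  have hcores : (List.ofFn fun ν => shiftCore m (((j ν : ℕ) * 2 ^ (ν : ℕ) : ℕ) : ℝ)) =
      (List.ofFn fun ν => (((j ν : ℕ) * 2 ^ (ν : ℕ) : ℕ) : ℝ)).map (shiftCore m) := by
    rw [List.map_ofFn]
    rfl
  have hshift : (List.ofFn fun ν => (((j ν : ℕ) * 2 ^ (ν : ℕ) : ℕ) : ℝ)).sum =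
      ((∑ ν : Fin L, (j ν : ℕ) * 2 ^ (ν : ℕ) : ℕ) : ℝ) := by
    rw [List.sum_ofFn, Nat.cast_sum]
  rw [dotProduct_mulVec, hcores, powers_vecMul_prod_map_shiftCore, hshift, zero_add,
    P.eval_eq_powers_dotProduct_coeff hP]

/-- Proposition 4.1(C): a polynomial of degree at most `m`
sampled on a uniform dyadic grid has QTT rank at most `m + 1`. For `L ≥ 1` and
a real polynomial `P` with `deg P ≤ m` there exist `(m+1)×(m+1)` cores
`G_ν(j)` and boundary vectors `p, q ∈ ℝ^{m+1}` such that for all binary digit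
tuples `j`, `P(Σ_ν j_ν 2^ν) = pᵀ (G_0(j₀)⋯G_{L−1}(j_{L−1})) q`. -/
theorem stmt16 (L m : ℕ) (hL : 1 ≤ L) (P : Polynomial ℝ) (hP : P.natDegree ≤ m) :
    ∃ (G : Fin L → Fin 2 → Matrix (Fin (m + 1)) (Fin (m + 1)) ℝ)
      (p q : Fin (m + 1) → ℝ),
      ∀ j : Fin L → Fin 2,
        P.eval ((∑ ν : Fin L, (j ν : ℕ) * 2 ^ (ν : ℕ) : ℕ) : ℝ) =
          p ⬝ᵥ ((List.ofFn fun ν : Fin L => G ν (j ν)).prod).mulVec q :=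
  stmt16_general L m P hP
end

section
/- Let L ≥ 1 and let x, y : (Fin L → Fin 2) → ℝ admit MPS/QTT representations of bond dimensions r and s respectively: x(j) = pᵀ (F_0(j₀)⋯F_{L−1}(j_{L−1})) q with F_ν(j) ∈ ℝ^{r×r}, p, q ∈ ℝ^r, and y(j) = uᵀ (H_0(j₀)⋯H_{L−1}(j_{L−1})) v with H_ν(j) ∈ ℝ^{s×s}, u, v ∈ ℝ^s. Then the pointwise (Hadamard) product x·y, defined by (x·y)(j) = x(j) y(j), admits an MPS/QTT representation of bond dimension r·s. -/
/-!
Take the Kronecker products `F ν k ⊗ₖ H ν k` as cores and `p ⊗ u`, `q ⊗ v` as boundary vectors.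
By the mixed-product property the product of the Kronecker cores is the Kronecker product of the
two core products, and the bilinear form of a Kronecker product against product vectors factors
as the product of the two bilinear forms. Finally `Fin r × Fin s` is flattened to `Fin (r * s)`.
-/

open Matrix Kronecker

namespace Matrix

variable {α m n : Type*} [CommSemiring α] [Fintype m] [Fintype n]

theorem prod_ofFn_kronecker [DecidableEq m] [DecidableEq n] :
    ∀ {L : ℕ} (A : Fin L → Matrix m m α) (B : Fin L → Matrix n n α),
      (List.ofFn fun ν => A ν ⊗ₖ B ν).prod = (List.ofFn A).prod ⊗ₖ (List.ofFn B).prod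
  | 0, _, _ => by simp
  | L + 1, A, B => by
    simp only [List.ofFn_succ, List.prod_cons]
    rw [prod_ofFn_kronecker (fun ν => A ν.succ) (fun ν => B ν.succ), mul_kronecker_mul]

theorem kronecker_mulVec_kronecker (M : Matrix m m α) (N : Matrix n n α)
    (q : m → α) (v : n → α) :
    (M ⊗ₖ N) *ᵥ (fun i => q i.1 * v i.2) = fun i => (M *ᵥ q) i.1 * (N *ᵥ v) i.2 := by
  ext ⟨i, k⟩
  simp only [mulVec, dotProduct, Fintype.sum_prod_type, kroneckerMap_apply, Finset.sum_mul_sum]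
  exact Finset.sum_congr rfl fun _ _ => Finset.sum_congr rfl fun _ _ => by ring

theorem dotProduct_kronecker (p w : m → α) (u z : n → α) :
    (fun i : m × n => p i.1 * u i.2) ⬝ᵥ (fun i => w i.1 * z i.2) = (p ⬝ᵥ w) * (u ⬝ᵥ z) := by
  simp only [dotProduct, Fintype.sum_prod_type, Finset.sum_mul_sum]
  exact Finset.sum_congr rfl fun _ _ => Finset.sum_congr rfl fun _ _ => by ring

theorem dotProduct_kronecker_mulVec (M : Matrix m m α) (N : Matrix n n α)
    (p q : m → α) (u v : n → α) :
    (fun i : m × n => p i.1 * u i.2) ⬝ᵥ (M ⊗ₖ N) *ᵥ (fun i => q i.1 * v i.2)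
      = (p ⬝ᵥ M *ᵥ q) * (u ⬝ᵥ N *ᵥ v) := by
  rw [kronecker_mulVec_kronecker, dotProduct_kronecker]

theorem prod_ofFn_reindex [DecidableEq m] [DecidableEq n] (e : m ≃ n) {L : ℕ}
    (A : Fin L → Matrix m m α) :
    (List.ofFn fun ν => reindex e e (A ν)).prod = reindex e e (List.ofFn A).prod := by
  simpa [List.map_ofFn, Function.comp_def] using
    (map_list_prod (reindexAlgEquiv α α e) (List.ofFn A)).symm

theorem dotProduct_reindex_mulVec (e : m ≃ n) (M : Matrix m m α) (a b : m → α) :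
    (a ∘ e.symm) ⬝ᵥ reindex e e M *ᵥ (b ∘ e.symm) = a ⬝ᵥ M *ᵥ b := by
  rw [reindex_apply, submatrix_mulVec_equiv, Equiv.symm_symm, Function.comp_assoc,
    e.symm_comp_self, Function.comp_id, comp_equiv_symm_dotProduct, Function.comp_assoc,
    e.symm_comp_self, Function.comp_id]

end Matrix

theorem stmt17_general (L : ℕ) (r s : ℕ)
    (F : Fin L → Fin 2 → Matrix (Fin r) (Fin r) ℝ) (p q : Fin r → ℝ)
    (H : Fin L → Fin 2 → Matrix (Fin s) (Fin s) ℝ) (u v : Fin s → ℝ)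
    (x y : (Fin L → Fin 2) → ℝ)
    (hx : ∀ j : Fin L → Fin 2,
      x j = p ⬝ᵥ ((List.ofFn fun ν : Fin L => F ν (j ν)).prod).mulVec q)
    (hy : ∀ j : Fin L → Fin 2,
      y j = u ⬝ᵥ ((List.ofFn fun ν : Fin L => H ν (j ν)).prod).mulVec v) :
    ∃ (G : Fin L → Fin 2 → Matrix (Fin (r * s)) (Fin (r * s)) ℝ)
      (a b : Fin (r * s) → ℝ),
      ∀ j : Fin L → Fin 2,
        x j * y j = a ⬝ᵥ ((List.ofFn fun ν : Fin L => G ν (j ν)).prod).mulVec b := by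
  let e : Fin r × Fin s ≃ Fin (r * s) := finProdFinEquiv
  refine ⟨fun ν k => reindex e e (F ν k ⊗ₖ H ν k), (fun i => p i.1 * u i.2) ∘ e.symm,
    (fun i => q i.1 * v i.2) ∘ e.symm, fun j => ?_⟩
  rw [hx, hy, prod_ofFn_reindex, dotProduct_reindex_mulVec, prod_ofFn_kronecker,
    dotProduct_kronecker_mulVec]

/-- Proposition 4.1(D): the Hadamard product of QTT tensors
of bond dimensions `r` and `s` has bond dimension `r·s`. If
`x(j) = pᵀ (F_0(j₀)⋯F_{L−1}(j_{L−1})) q` with `r×r` cores and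
`y(j) = uᵀ (H_0(j₀)⋯H_{L−1}(j_{L−1})) v` with `s×s` cores, then there are
`(r·s)×(r·s)` cores `G_ν(j)` and vectors `a, b ∈ ℝ^{r·s}` with
`x(j)·y(j) = aᵀ (G_0(j₀)⋯G_{L−1}(j_{L−1})) b` for all `j`. -/
theorem stmt17 (L : ℕ) (hL : 1 ≤ L) (r s : ℕ)
    (F : Fin L → Fin 2 → Matrix (Fin r) (Fin r) ℝ) (p q : Fin r → ℝ)
    (H : Fin L → Fin 2 → Matrix (Fin s) (Fin s) ℝ) (u v : Fin s → ℝ)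
    (x y : (Fin L → Fin 2) → ℝ)
    (hx : ∀ j : Fin L → Fin 2,
      x j = p ⬝ᵥ ((List.ofFn fun ν : Fin L => F ν (j ν)).prod).mulVec q)
    (hy : ∀ j : Fin L → Fin 2,
      y j = u ⬝ᵥ ((List.ofFn fun ν : Fin L => H ν (j ν)).prod).mulVec v) :
    ∃ (G : Fin L → Fin 2 → Matrix (Fin (r * s)) (Fin (r * s)) ℝ)
      (a b : Fin (r * s) → ℝ),
      ∀ j : Fin L → Fin 2,
        x j * y j = a ⬝ᵥ ((List.ofFn fun ν : Fin L => G ν (j ν)).prod).mulVec b :=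
  stmt17_general L r s F p q H u v x y hx hy
end
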